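/- arXiv:2602.22891 — 4 statements merged into one kernel-verified Lean document; each statement's English description precedes it below -/
import Mathlib

section
/- Let R be a Noetherian local ring with maximal ideal m, and let a_1,...,a_m ∈ m. Set S = R/⟨a_1,...,a_m⟩, a local ring. Then dim(R) − m ≤ dim(S). -/
namespace Stmt6Aux

universe u


section ArtinianLemma

variable {R : Type*} [CommRing R]

/-- Transfer Artinian-ness along a surjective algebra map. -/
lemma isArtinian_of_tower_surj {S M : Type*} [CommRing S] [Algebra R S]
    [AddCommGroup M] [Module R M] [Module S M] [IsScalarTower R S M]
    (h : Function.Surjective (algebraMap R S)) [IsArtinian S M] : IsArtinian R M := by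
  rw [isArtinian_iff]
  set f : Submodule R M → Submodule S M := fun N =>
    { carrier := N
      add_mem' := fun ha hb => N.add_mem ha hb
      zero_mem' := N.zero_mem
      smul_mem' := by
        intro s x hx
        obtain ⟨r, rfl⟩ := h s
        rw [algebraMap_smul]
        exact N.smul_mem r hx } with hf
  have hmono : ∀ N₁ N₂ : Submodule R M, N₁ < N₂ → f N₁ < f N₂ := by
    intro N₁ N₂ hlt
    rw [SetLike.lt_iff_le_and_exists] at hlt ⊢
    obtain ⟨hle, x, hx1, hx2⟩ := hlt
    exact ⟨fun y hy => hle hy, x, hx1, hx2⟩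
  exact Subrelation.wf (fun {N₁ N₂} h' => hmono _ _ h')
    (InvImage.wf f ((isArtinian_iff S M).mp ‹_›))

lemma isArtinian_of_maximal_smul_top_eq_bot {M : Type*} [AddCommGroup M] [Module R M]
    (𝔪 : Ideal R) (h𝔪 : 𝔪.IsMaximal) [Module.Finite R M]
    (h : 𝔪 • (⊤ : Submodule R M) = ⊥) : IsArtinian R M := by
  have htor : Module.IsTorsionBySet R M 𝔪 := by
    intro x a
    have : (a : R) • x ∈ 𝔪 • (⊤ : Submodule R M) :=
      Submodule.smul_mem_smul a.2 Submodule.mem_top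
    rw [h] at this
    simpa using this
  letI : Module (R ⧸ 𝔪) M := htor.module
  haveI : IsScalarTower R (R ⧸ 𝔪) M := htor.isScalarTower
  haveI : Module.Finite (R ⧸ 𝔪) M :=
    Module.Finite.of_restrictScalars_finite R (R ⧸ 𝔪) M
  letI : Field (R ⧸ 𝔪) := Ideal.Quotient.field 𝔪
  haveI : IsArtinianRing (R ⧸ 𝔪) := DivisionRing.instIsArtinianRing
  haveI : IsArtinian (R ⧸ 𝔪) M := isArtinian_of_fg_of_artinian' (R := R ⧸ 𝔪) (M := M)
  exact isArtinian_of_tower_surj (S := R ⧸ 𝔪) (M := M)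
    (by rw [Ideal.Quotient.algebraMap_eq]; exact Ideal.Quotient.mk_surjective)

lemma isArtinian_of_pow_smul_top_eq_bot (𝔪 : Ideal R) (h𝔪 : 𝔪.IsMaximal) :
    ∀ (k : ℕ) (M : Type*) [AddCommGroup M] [Module R M], IsNoetherian R M →
      𝔪 ^ k • (⊤ : Submodule R M) = ⊥ → IsArtinian R M := by
  intro k
  induction k with
  | zero =>
    intro M _ _ _ h
    rw [pow_zero, Ideal.one_eq_top, Submodule.top_smul] at h
    haveI : Subsingleton M := (Submodule.subsingleton_iff R).mp
      (subsingleton_of_bot_eq_top h.symm)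
    infer_instance
  | succ k ih =>
    intro M _ _ hNoeth h
    haveI := hNoeth
    set N : Submodule R M := 𝔪 ^ k • ⊤ with hN
    rw [isArtinian_iff_submodule_quotient N]
    constructor
    · -- N is Artinian : 𝔪 • ⊤_N = ⊥
      haveI : Module.Finite R N := by
        rw [Module.Finite.iff_fg]
        exact IsNoetherian.noetherian N
      apply isArtinian_of_maximal_smul_top_eq_bot 𝔪 h𝔪
      apply Submodule.map_injective_of_injective (N.injective_subtype)
      rw [Submodule.map_smul'', Submodule.map_bot, Submodule.map_top, Submodule.range_subtype]
      rw [hN, ← Submodule.smul_assoc, smul_eq_mul, ← pow_succ']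
      exact h
    · -- quotient is Artinian via ih
      apply ih
      · infer_instance
      · have htop : (⊤ : Submodule R (M ⧸ N)) = Submodule.map N.mkQ ⊤ := by
          rw [Submodule.map_top, Submodule.range_mkQ]
        rw [htop, ← Submodule.map_smul'', ← hN]
        have : N ≤ LinearMap.ker N.mkQ := by rw [Submodule.ker_mkQ]
        have hNN : Submodule.map N.mkQ N = ⊥ := by
          rw [← le_bot_iff, Submodule.map_le_iff_le_comap, Submodule.comap_bot,
            Submodule.ker_mkQ]
        exact hNN

end ArtinianLemma

section ArtApply
variable {R : Type*} [CommRing R]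

/-- A Noetherian ring with a unique prime ideal (which is maximal) is Artinian. -/
lemma isArtinianRing_of_unique_prime {R : Type u} [CommRing R] [IsNoetherianRing R] (𝔪 : Ideal R)
    (h𝔪 : 𝔪.IsMaximal) (hu : ∀ P : Ideal R, P.IsPrime → P = 𝔪) : IsArtinianRing R := by
  have hnil : nilradical R = 𝔪 := by
    rw [nilradical_eq_sInf]
    apply le_antisymm (sInf_le (h𝔪.isPrime))
    exact le_sInf fun J hJ => (hu J hJ).ge
  obtain ⟨k, hk⟩ := IsNoetherianRing.isNilpotent_nilradical R
  apply isArtinian_of_pow_smul_top_eq_bot 𝔪 h𝔪 k R inferInstance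
  rw [smul_eq_mul, Ideal.mul_top, ← hnil, hk]
  rfl

end ArtApply

section LocalPIT

open IsLocalRing Ideal

/-- Krull's principal ideal theorem, local version: in a Noetherian local ring whose
maximal ideal is minimal over a principal ideal `(a)`, every prime strictly below the
maximal ideal is a minimal prime of the ring. -/
lemma local_pit {R : Type u} [CommRing R] [IsNoetherianRing R] [IsLocalRing R] {a : R}
    (hmin : maximalIdeal R ∈ (Ideal.span {a}).minimalPrimes)
    {q : Ideal R} (hq : q.IsPrime) (hlt : q < maximalIdeal R)
    {p : Ideal R} (hp : p.IsPrime) (hpq : p ≤ q) : p = q := by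
  have hspan_le : Ideal.span {a} ≤ maximalIdeal R := hmin.1.2
  have haM : a ∈ maximalIdeal R := hspan_le (Ideal.subset_span rfl)
  -- every prime containing `a` is the maximal ideal
  have huniq : ∀ P : Ideal R, P.IsPrime → a ∈ P → P = maximalIdeal R := by
    intro P hP haP
    have hle : Ideal.span {a} ≤ P := (Ideal.span_singleton_le_iff_mem P).mpr haP
    obtain ⟨p', hp', hp'le⟩ := Ideal.exists_minimalPrimes_le hle
    have h1 : p' ≤ maximalIdeal R := hp'le.trans (le_maximalIdeal hP.ne_top)
    have h2 : maximalIdeal R ≤ p' := hmin.2 hp'.1 h1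
    exact le_antisymm (le_maximalIdeal hP.ne_top) (h2.trans hp'le)
  -- a ∉ q
  have haq : a ∉ q := fun haq => hlt.ne (huniq q hq haq)
  -- R/(a) is Artinian
  haveI : IsArtinianRing (R ⧸ Ideal.span {a}) := by
    set mk := Ideal.Quotient.mk (Ideal.span {a})
    have hne : Ideal.span {a} ≠ ⊤ := fun h =>
      (maximalIdeal.isMaximal R).ne_top (top_le_iff.mp (h ▸ hspan_le))
    apply isArtinianRing_of_unique_prime ((maximalIdeal R).map mk)
    · -- mapped maximal ideal is maximal
      rcases Ideal.map_eq_top_or_isMaximal_of_surjective mk Ideal.Quotient.mk_surjective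
        (maximalIdeal.isMaximal R) with htop | hmax
      · exfalso
        have : ((maximalIdeal R).map mk).comap mk = ⊤ := by rw [htop, Ideal.comap_top]
        rw [Ideal.comap_map_of_surjective mk Ideal.Quotient.mk_surjective,
          ← RingHom.ker_eq_comap_bot, Ideal.mk_ker, sup_eq_left.mpr hspan_le] at this
        exact (maximalIdeal.isMaximal R).ne_top this
      · exact hmax
    · intro P hP
      have hcom : (P.comap mk).IsPrime := hP.comap mk
      have haP : a ∈ P.comap mk := by
        simp only [Ideal.mem_comap]
        have : (mk a) = 0 := Ideal.Quotient.eq_zero_iff_mem.mpr (Ideal.subset_span rfl)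
        rw [this]; exact P.zero_mem
      have := huniq _ hcom haP
      calc P = (P.comap mk).map mk := (Ideal.map_comap_of_surjective _
                Ideal.Quotient.mk_surjective P).symm
        _ = (maximalIdeal R).map mk := by rw [this]
  -- localization at q
  set T := Localization.AtPrime q
  set φ := algebraMap R T
  haveI : IsNoetherianRing T := IsLocalization.isNoetherianRing q.primeCompl T ‹_›
  set Q : ℕ → Ideal R := fun n => ((q.map φ) ^ n).comap φ with hQ
  have hQmono : ∀ {i j}, i ≤ j → Q j ≤ Q i := by
    intro i j hij
    exact Ideal.comap_mono (Ideal.pow_le_pow_right hij)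
  -- stabilization in R/(a)
  set mk := Ideal.Quotient.mk (Ideal.span {a})
  have hstab : ∃ n, (Q n).map mk = (Q (n + 1)).map mk := by
    obtain ⟨n, hn⟩ := IsArtinian.monotone_stabilizes (R := R ⧸ Ideal.span {a})
      (M := R ⧸ Ideal.span {a})
      ⟨fun n => (Q n).map mk, fun i j hij => Ideal.map_mono (hQmono hij)⟩
    exact ⟨n, (hn (n+1) (Nat.le_succ n))⟩
  obtain ⟨n, hn⟩ := hstab
  -- Q n ≤ Q (n+1) ⊔ 𝔪 • Q n
  have hsub : Q n ≤ Q (n + 1) ⊔ maximalIdeal R • Q n := by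
    intro x hx
    have hx' : x ∈ Q (n+1) ⊔ Ideal.span {a} := by
      have : mk x ∈ (Q (n+1)).map mk := by rw [← hn]; exact Ideal.mem_map_of_mem mk hx
      have h2 : x ∈ ((Q (n+1)).map mk).comap mk := this
      rwa [Ideal.comap_map_of_surjective mk Ideal.Quotient.mk_surjective,
        ← RingHom.ker_eq_comap_bot, Ideal.mk_ker] at h2
    obtain ⟨y, hy, z, hz, rfl⟩ := Submodule.mem_sup.mp hx'
    obtain ⟨t, rfl⟩ := Ideal.mem_span_singleton'.mp hz
    -- t * a ∈ Q n  and  a is invertible in T, so t ∈ Q n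
    have htA : t * a ∈ Q n := by
      have hyQn : y ∈ Q n := hQmono (Nat.le_succ n) hy
      have := (Q n).sub_mem hx hyQn
      simpa using this
    have hTunit : IsUnit (φ a) := IsLocalization.map_units T (⟨a, haq⟩ : q.primeCompl)
    have htQ : t ∈ Q n := by
      have : φ t * φ a ∈ (q.map φ) ^ n := by
        rw [← _root_.map_mul]; exact htA
      rw [mul_comm] at this
      exact (Ideal.unit_mul_mem_iff_mem _ hTunit).mp this
    apply Submodule.mem_sup.mpr
    refine ⟨y, hy, t * a, ?_, rfl⟩
    rw [mul_comm]
    exact Submodule.smul_mem_smul haM htQ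
  -- Nakayama: Q n = Q (n+1)
  have hQeq : Q n = Q (n + 1) := by
    apply le_antisymm _ (hQmono (Nat.le_succ n))
    apply Submodule.le_of_le_smul_of_le_jacobson_bot (IsNoetherian.noetherian _) _ hsub
    rw [jacobson_eq_maximalIdeal ⊥ bot_ne_top]
  -- push to T : (qT)^n = qT • (qT)^n
  have hmapQ : ∀ m : ℕ, (Q m).map φ = (q.map φ) ^ m := fun m =>
    IsLocalization.map_comap q.primeCompl T _
  have hTeq : (q.map φ) ^ n = (q.map φ) • ((q.map φ) ^ n) := by
    have := congrArg (Ideal.map φ) hQeq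
    rw [hmapQ, hmapQ] at this
    rw [smul_eq_mul, ← pow_succ']
    exact this
  -- Nakayama in T : (qT)^n = ⊥
  haveI := hq
  haveI : IsLocalRing T := Localization.AtPrime.isLocalRing q
  have hbot : (q.map φ) ^ n = ⊥ := by
    apply Submodule.eq_bot_of_le_smul_of_le_jacobson_bot (q.map φ) _
      (IsNoetherian.noetherian _) hTeq.le
    rw [jacobson_eq_maximalIdeal ⊥ bot_ne_top]
    rw [Localization.AtPrime.map_eq_maximalIdeal]
  -- conclude p = q
  refine le_antisymm hpq ?_
  have hdisj : Disjoint (q.primeCompl : Set R) (p : Set R) :=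
    Set.disjoint_left.mpr fun x hx hxp => hx (hpq hxp)
  have hpT : (p.map φ).IsPrime :=
    IsLocalization.isPrime_of_isPrime_disjoint q.primeCompl T p hp hdisj
  have hqlepT : q.map φ ≤ p.map φ := by
    apply Ideal.IsPrime.le_of_pow_le (hP := hpT) (n := n)
    rw [hbot]; exact bot_le
  have hcomap : q ≤ p := by
    have h1 : ((q.map φ).comap φ) ≤ ((p.map φ).comap φ) := Ideal.comap_mono hqlepT
    rwa [show (q.map φ).comap φ = q from IsLocalization.comap_map_of_isPrime_disjoint q.primeCompl T hq
        (Set.disjoint_left.mpr fun x hx hxq => hx hxq),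
      show (p.map φ).comap φ = p from IsLocalization.comap_map_of_isPrime_disjoint q.primeCompl T hp hdisj] at h1
  exact hcomap

end LocalPIT

open Ideal

/-- Krull's principal ideal theorem: a prime minimal over a principal ideal has height ≤ 1. -/
lemma pit {R : Type u} [CommRing R] [IsNoetherianRing R] {a : R} {r : Ideal R}
    (hmin : r ∈ (Ideal.span {a}).minimalPrimes)
    {p q : Ideal R} (hp : p.IsPrime) (hq : q.IsPrime)
    (hpq : p < q) (hqr : q < r) : False := by
  haveI hr : r.IsPrime := hmin.1.1
  set T := Localization.AtPrime r
  set φ := algebraMap R T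
  haveI : IsNoetherianRing T := IsLocalization.isNoetherianRing r.primeCompl T ‹_›
  haveI : IsLocalRing T := Localization.AtPrime.isLocalRing r
  have hdisj : ∀ {P : Ideal R}, P.IsPrime → P ≤ r → Disjoint (r.primeCompl : Set R) (P : Set R) :=
    fun {P} hP hPr => Set.disjoint_left.mpr fun x hx hxP => hx (hPr hxP)
  have hcomap : ∀ {P : Ideal R} (hP : P.IsPrime) (hPr : P ≤ r), (P.map φ).comap φ = P :=
    fun {P} hP hPr => IsLocalization.comap_map_of_isPrime_disjoint r.primeCompl T hP
      (hdisj hP hPr)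
  -- the maximal ideal of T is minimal over (φ a)
  have hmem : a ∈ r := hmin.1.2 (Ideal.subset_span rfl)
  have hmax_min : IsLocalRing.maximalIdeal T ∈ (Ideal.span {φ a}).minimalPrimes := by
    constructor
    · refine ⟨(IsLocalRing.maximalIdeal.isMaximal T).isPrime, ?_⟩
      rw [Ideal.span_singleton_le_iff_mem, ← Localization.AtPrime.map_eq_maximalIdeal]
      exact Ideal.mem_map_of_mem φ hmem
    · rintro P ⟨hP, hsP⟩ hPle
      have hcP : (P.comap φ).IsPrime := by haveI := hP; exact Ideal.IsPrime.comap φ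
      have h1 : P.comap φ ≤ r := by
        have := Ideal.comap_mono (f := φ) hPle
        rwa [show (IsLocalRing.maximalIdeal T).comap φ = r from Localization.AtPrime.comap_maximalIdeal] at this
      have h2 : Ideal.span {a} ≤ P.comap φ := by
        rw [Ideal.span_singleton_le_iff_mem, Ideal.mem_comap]
        exact hsP (Ideal.subset_span rfl)
      have h3 : r ≤ P.comap φ := hmin.2 ⟨hcP, h2⟩ h1
      have h4 : r = P.comap φ := le_antisymm h3 h1
      have h5 : r.map φ = P :=
        (congrArg (Ideal.map φ) h4).trans (IsLocalization.map_comap r.primeCompl T P)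
      rw [← h5, Localization.AtPrime.map_eq_maximalIdeal]
  -- map the chain
  have hpT : (p.map φ).IsPrime :=
    IsLocalization.isPrime_of_isPrime_disjoint r.primeCompl T p hp (hdisj hp (hpq.le.trans hqr.le))
  have hqT : (q.map φ).IsPrime :=
    IsLocalization.isPrime_of_isPrime_disjoint r.primeCompl T q hq (hdisj hq hqr.le)
  have hqlt : q.map φ < IsLocalRing.maximalIdeal T := by
    rw [← Localization.AtPrime.map_eq_maximalIdeal]
    constructor
    · exact Ideal.map_mono hqr.le
    · intro hle
      have := Ideal.comap_mono (f := φ) hle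
      rw [hcomap hr le_rfl, hcomap hq hqr.le] at this
      exact hqr.not_ge this
  have hple : p.map φ ≤ q.map φ := Ideal.map_mono hpq.le
  have := local_pit hmax_min hqT hqlt hpT hple
  have : p = q := by
    have h := congrArg (Ideal.comap φ) this
    rwa [hcomap hp (hpq.le.trans hqr.le), hcomap hq hqr.le] at h
  exact hpq.ne this

/-- Relative version: a prime minimal over `p ⊔ (a)` admits no chain `p < q < r`. -/
lemma pit_rel {R : Type u} [CommRing R] [IsNoetherianRing R] {a : R} {p q r : Ideal R}
    (hp : p.IsPrime) (hq : q.IsPrime)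
    (hmin : r ∈ (p ⊔ Ideal.span {a}).minimalPrimes)
    (hpq : p < q) (hqr : q < r) : False := by
  haveI hr : r.IsPrime := hmin.1.1
  set mk := Ideal.Quotient.mk p
  set Rp := R ⧸ p
  haveI : IsDomain Rp := Ideal.Quotient.isDomain p
  have hker : RingHom.ker mk = p := Ideal.mk_ker
  have hpler : p ≤ r := le_sup_left.trans hmin.1.2
  have har : Ideal.span {a} ≤ r := le_sup_right.trans hmin.1.2
  have hcomap_map : ∀ {P : Ideal R}, p ≤ P → (P.map mk).comap mk = P := by
    intro P hP
    rw [Ideal.comap_map_of_surjective mk Ideal.Quotient.mk_surjective,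
      ← RingHom.ker_eq_comap_bot, hker, sup_eq_left.mpr hP]
  have hqprime : (q.map mk).IsPrime :=
    Ideal.map_isPrime_of_surjective Ideal.Quotient.mk_surjective
      (by rw [hker]; exact hpq.le)
  have hrprime : (r.map mk).IsPrime :=
    Ideal.map_isPrime_of_surjective Ideal.Quotient.mk_surjective
      (by rw [hker]; exact hpler)
  -- r/p is minimal over span {mk a}
  have hrmin : r.map mk ∈ (Ideal.span {mk a}).minimalPrimes := by
    constructor
    · refine ⟨hrprime, ?_⟩
      rw [Ideal.span_singleton_le_iff_mem]
      exact Ideal.mem_map_of_mem mk (har (Ideal.subset_span rfl))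
    · rintro P ⟨hP, hsP⟩ hPle
      have hcP : (P.comap mk).IsPrime := by haveI := hP; exact Ideal.IsPrime.comap mk
      have h2 : p ⊔ Ideal.span {a} ≤ P.comap mk := by
        apply sup_le
        · intro x hx
          have hx0 : mk x = 0 := Ideal.Quotient.eq_zero_iff_mem.mpr hx
          simp only [Ideal.mem_comap, hx0]
          exact P.zero_mem
        · rw [Ideal.span_singleton_le_iff_mem, Ideal.mem_comap]
          exact hsP (Ideal.subset_span rfl)
      have h1 : P.comap mk ≤ r := by
        have := Ideal.comap_mono (f := mk) hPle
        rwa [hcomap_map hpler] at this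
      have h3 : r ≤ P.comap mk := hmin.2 ⟨hcP, h2⟩ h1
      calc r.map mk ≤ (P.comap mk).map mk := Ideal.map_mono h3
        _ = P := Ideal.map_comap_of_surjective mk Ideal.Quotient.mk_surjective P
  -- chain ⊥ < q/p < r/p
  have hbotq : (⊥ : Ideal Rp) < q.map mk := by
    rw [bot_lt_iff_ne_bot]
    intro hbot
    have : q ≤ p := by
      have : q ≤ (q.map mk).comap mk := Ideal.le_comap_map
      rwa [hbot, ← RingHom.ker_eq_comap_bot, hker] at this
    exact hpq.not_ge this
  have hqrlt : q.map mk < r.map mk := by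
    constructor
    · exact Ideal.map_mono hqr.le
    · intro hle
      have := Ideal.comap_mono (f := mk) hle
      rw [hcomap_map hpler, hcomap_map hpq.le] at this
      exact hqr.not_ge this
  exact pit hrmin Ideal.bot_prime hqprime hbotq hqrlt

/-- Exchange lemma: one can reselect the middle prime of `p < q < r` so that it contains `a ∈ r`. -/
lemma exchange {R : Type u} [CommRing R] [IsNoetherianRing R] {a : R} {p q r : Ideal R}
    (hp : p.IsPrime) (hq : q.IsPrime) (hr : r.IsPrime)
    (hpq : p < q) (hqr : q < r) (ha : a ∈ r) :
    ∃ q' : Ideal R, q'.IsPrime ∧ p < q' ∧ q' < r ∧ a ∈ q' := by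
  by_cases hap : a ∈ p
  · exact ⟨q, hq, hpq, hqr, hpq.le hap⟩
  · have hle : p ⊔ Ideal.span {a} ≤ r := sup_le (hpq.le.trans hqr.le)
      ((Ideal.span_singleton_le_iff_mem r).mpr ha)
    obtain ⟨q', hq', hq'le⟩ := Ideal.exists_minimalPrimes_le hle
    have hq'prime : q'.IsPrime := hq'.1.1
    have haq' : a ∈ q' := hq'.1.2 (le_sup_right (a := p) (Ideal.subset_span rfl))
    have hpq' : p < q' := lt_of_le_of_ne (le_sup_left.trans hq'.1.2) (fun h => hap (h ▸ haq'))
    refine ⟨q', hq'prime, hpq', lt_of_le_of_ne hq'le ?_, haq'⟩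
    rintro rfl
    exact pit_rel hp hq hq' hpq hqr

open Ideal

/-- Chain descent: a chain of primes of positive length ending at a prime containing `a`
can be replaced by a chain one shorter, with the same top, all of whose members contain `a`. -/
lemma descent {R : Type u} [CommRing R] [IsNoetherianRing R] (a : R) :
    ∀ (n : ℕ) (c : LTSeries (PrimeSpectrum R)), c.length = n → 1 ≤ n →
      a ∈ c.last.asIdeal →
      ∃ d : LTSeries (PrimeSpectrum R), d.length + 1 = n ∧ a ∈ d.head.asIdeal ∧
        d.last = c.last := by
  intro n
  induction n with
  | zero => intro c _ h; omega
  | succ n ih =>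
    intro c hc _ halast
    rcases Nat.eq_zero_or_pos n with hn | hn
    · subst hn
      exact ⟨RelSeries.singleton _ c.last, rfl, by
        rwa [RelSeries.head_singleton], by rw [RelSeries.last_singleton]⟩
    · -- length ≥ 2
      have hlen1 : c.eraseLast.length = n := by simp [hc]
      have hne : c.length ≠ 0 := by omega
      have hne1 : c.eraseLast.length ≠ 0 := by omega
      have rel1 : c.eraseLast.last < c.last := c.eraseLast_last_rel_last hne
      have rel0 : c.eraseLast.eraseLast.last < c.eraseLast.last :=
        c.eraseLast.eraseLast_last_rel_last hne1
      obtain ⟨q', hq'p, h0q, hq2, haq⟩ := exchange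
        (c.eraseLast.eraseLast.last.isPrime) (c.eraseLast.last.isPrime) (c.last.isPrime)
        rel0 rel1 halast
      set qpt : PrimeSpectrum R := ⟨q', hq'p⟩
      have hstep : c.eraseLast.eraseLast.last < qpt := h0q
      set c' : LTSeries (PrimeSpectrum R) := c.eraseLast.eraseLast.snoc qpt hstep with hc'
      have hc'len : c'.length = n := by simp [hc', hc]; omega
      have hc'last : c'.last = qpt := RelSeries.last_snoc _ _ _
      obtain ⟨d', hd'len, hd'head, hd'last⟩ := ih c' hc'len hn (by
        rw [hc'last]; exact haq)
      have hlast : d'.last < c.last := by rw [hd'last, hc'last]; exact hq2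
      refine ⟨d'.snoc c.last hlast, by simpa using by omega, ?_, RelSeries.last_snoc _ _ _⟩
      rw [RelSeries.head_snoc]
      exact hd'head

open Ideal IsLocalRing

variable {R : Type u} [CommRing R] [IsNoetherianRing R] [IsLocalRing R]

/-- A chain of primes all containing `a` gives a lower bound on the dimension of `R/(a)`. -/
lemma chain_bound {a : R} (d : LTSeries (PrimeSpectrum R)) (hhead : a ∈ d.head.asIdeal) :
    (d.length : WithBot ℕ∞) ≤ ringKrullDim (R ⧸ Ideal.span {a}) := by
  set mk := Ideal.Quotient.mk (Ideal.span {a})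
  have hker : RingHom.ker mk = Ideal.span {a} := Ideal.mk_ker
  have hcont : ∀ i : Fin (d.length + 1), Ideal.span {a} ≤ (d i).asIdeal := by
    intro i
    rw [Ideal.span_singleton_le_iff_mem]
    have : d.head ≤ d i := d.monotone (Fin.zero_le i)
    exact this hhead
  have hprime : ∀ i : Fin (d.length + 1), (((d i).asIdeal).map mk).IsPrime := fun i =>
    Ideal.map_isPrime_of_surjective Ideal.Quotient.mk_surjective (by rw [hker]; exact hcont i)
  set e : LTSeries (PrimeSpectrum (R ⧸ Ideal.span {a})) :=
    ⟨d.length, fun i => ⟨((d i).asIdeal).map mk, hprime i⟩, by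
      intro i
      show (((d i.castSucc).asIdeal).map mk) < (((d i.succ).asIdeal).map mk)
      have hstep : (d i.castSucc).asIdeal < (d i.succ).asIdeal := d.step i
      constructor
      · exact Ideal.map_mono hstep.le
      · intro hle
        have h2 := Ideal.comap_mono (f := mk) hle
        rw [Ideal.comap_map_of_surjective mk Ideal.Quotient.mk_surjective,
          Ideal.comap_map_of_surjective mk Ideal.Quotient.mk_surjective,
          ← RingHom.ker_eq_comap_bot, hker,
          sup_eq_left.mpr (hcont _), sup_eq_left.mpr (hcont _)] at h2
        exact hstep.not_ge h2⟩
  show (d.length : WithBot ℕ∞) ≤ Order.krullDim (PrimeSpectrum (R ⧸ Ideal.span {a}))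
  rw [Order.krullDim]
  exact le_iSup (fun p : LTSeries (PrimeSpectrum (R ⧸ Ideal.span {a})) =>
    ((p.length : ℕ) : WithBot ℕ∞)) e

lemma step1 {a : R} (ha : a ∈ maximalIdeal R) :
    ringKrullDim R ≤ ringKrullDim (R ⧸ Ideal.span {a}) + 1 := by
  have hne : Ideal.span {a} ≠ ⊤ := fun h =>
    (maximalIdeal.isMaximal R).ne_top (top_le_iff.mp
      (h ▸ (Ideal.span_singleton_le_iff_mem _).mpr ha))
  haveI : Nontrivial (R ⧸ Ideal.span {a}) := Ideal.Quotient.nontrivial_iff.mpr hne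
  have hnonneg : (0 : WithBot ℕ∞) ≤ ringKrullDim (R ⧸ Ideal.span {a}) :=
    ringKrullDim_nonneg_of_nontrivial
  have hmono : ringKrullDim (R ⧸ Ideal.span {a}) ≤ ringKrullDim (R ⧸ Ideal.span {a}) + 1 := by
    nth_rewrite 1 [← add_zero (ringKrullDim (R ⧸ Ideal.span {a}))]
    exact add_le_add_right (by norm_num) _
  show Order.krullDim (PrimeSpectrum R) ≤ _
  rw [Order.krullDim]
  apply iSup_le
  intro c
  by_cases hlast : a ∈ c.last.asIdeal
  · rcases Nat.eq_zero_or_pos c.length with h0 | h1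
    · rw [h0]
      exact le_trans (le_trans (by norm_num) hnonneg) hmono
    · obtain ⟨d, hdlen, hdhead, _⟩ := descent a c.length c rfl h1 hlast
      calc (c.length : WithBot ℕ∞) = (d.length : WithBot ℕ∞) + 1 := by
            rw [← hdlen]; push_cast; ring
        _ ≤ ringKrullDim (R ⧸ Ideal.span {a}) + 1 :=
            add_le_add_left (chain_bound d hdhead) 1
  · -- extend the chain by the maximal ideal
    have hlt : c.last < (⟨maximalIdeal R, (maximalIdeal.isMaximal R).isPrime⟩ : PrimeSpectrum R) := by
      constructor
      · exact le_maximalIdeal c.last.isPrime.ne_top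
      · intro hle
        exact hlast (hle ha)
    set c' := c.snoc _ hlt with hc'
    have hc'len : c'.length = c.length + 1 := rfl
    obtain ⟨d, hdlen, hdhead, _⟩ := descent a c'.length c' rfl (by omega)
      (by rw [RelSeries.last_snoc]; exact ha)
    have : d.length = c.length := by omega
    calc (c.length : WithBot ℕ∞) = (d.length : WithBot ℕ∞) := by rw [this]
      _ ≤ ringKrullDim (R ⧸ Ideal.span {a}) := chain_bound d hdhead
      _ ≤ _ := hmono

open Ideal IsLocalRing



lemma aux_stmt6 : ∀ (m : ℕ) (R : Type u) [CommRing R] [IsNoetherianRing R] [IsLocalRing R]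
    (a : Fin m → R), (∀ i, a i ∈ maximalIdeal R) →
    ringKrullDim R ≤ ringKrullDim (R ⧸ Ideal.span (Set.range a)) + (m : WithBot ℕ∞) := by
  intro m
  induction m with
  | zero =>
    intro R _ _ _ a _
    have h0 : Set.range a = ∅ := Set.range_eq_empty a
    rw [h0, Ideal.span_empty, Nat.cast_zero, add_zero,
      ringKrullDim_eq_of_ringEquiv (RingEquiv.quotientBot R)]
  | succ m ih =>
    intro R _ _ _ a ha
    set J : Ideal R := Ideal.span {a (Fin.last m)} with hJ
    have hJle : J ≤ maximalIdeal R := (Ideal.span_singleton_le_iff_mem _).mpr (ha _)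
    have hJne : J ≠ ⊤ := fun h => (maximalIdeal.isMaximal R).ne_top (top_le_iff.mp (h ▸ hJle))
    set R' := R ⧸ J
    set mk := Ideal.Quotient.mk J
    haveI : Nontrivial R' := Ideal.Quotient.nontrivial_iff.mpr hJne
    haveI : IsLocalRing R' := IsLocalRing.of_surjective' mk Ideal.Quotient.mk_surjective
    -- the images of the first m elements lie in the maximal ideal of R'
    set b : Fin m → R' := fun i => mk (a i.castSucc) with hb
    have hbmem : ∀ i, b i ∈ maximalIdeal R' := by
      intro i
      rw [mem_maximalIdeal, mem_nonunits_iff]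
      intro hunit
      obtain ⟨y, hy⟩ := isUnit_iff_exists_inv.mp hunit
      obtain ⟨z, rfl⟩ := Ideal.Quotient.mk_surjective y
      have : a i.castSucc * z - 1 ∈ J := by
        rw [← Ideal.Quotient.eq_zero_iff_mem, _root_.map_sub, _root_.map_mul, _root_.map_one,
          sub_eq_zero]
        exact hy
      have h1 : (1 : R) ∈ maximalIdeal R := by
        have h2 : a i.castSucc * z ∈ maximalIdeal R :=
          Ideal.mul_mem_right _ _ (ha _)
        have := (maximalIdeal R).sub_mem h2 (hJle this)
        simpa using this
      exact (maximalIdeal.isMaximal R).ne_top (Ideal.eq_top_of_unit_mem _ _ 1 h1 (mul_one 1))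
    -- the two-step quotient identification
    have hiso : (R' ⧸ Ideal.span (Set.range b)) ≃+* R ⧸ Ideal.span (Set.range a) := by
      have h1 : Ideal.span (Set.range b) =
          (Ideal.span (Set.range (fun i : Fin m => a i.castSucc))).map mk := by
        rw [Ideal.map_span, ← Set.range_comp]
        rfl
      rw [h1]
      refine (DoubleQuot.quotQuotEquivQuotSup J _).trans (Ideal.quotEquivOfEq ?_)
      rw [hJ, ← Ideal.span_union, Set.singleton_union]
      congr 1
      ext x
      constructor
      · rintro (rfl | ⟨i, rfl⟩)
        · exact ⟨Fin.last m, rfl⟩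
        · exact ⟨i.castSucc, rfl⟩
      · rintro ⟨i, rfl⟩
        induction i using Fin.lastCases with
        | last => exact Set.mem_insert _ _
        | cast j => exact Set.mem_insert_of_mem _ ⟨j, rfl⟩
    have hstep := step1 (ha (Fin.last m))
    have hih := ih R' b hbmem
    rw [ringKrullDim_eq_of_ringEquiv hiso] at hih
    calc ringKrullDim R ≤ ringKrullDim R' + 1 := hstep
      _ ≤ (ringKrullDim (R ⧸ Ideal.span (Set.range a)) + (m : WithBot ℕ∞)) + 1 :=
          add_le_add_left hih 1
      _ = ringKrullDim (R ⧸ Ideal.span (Set.range a)) + ((m + 1 : ℕ) : WithBot ℕ∞) := by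
          rw [add_assoc]
          congr 1

end Stmt6Aux


/-- Let `R` be a Noetherian local ring with maximal ideal `𝔪`, and
`a_1,…,a_m ∈ 𝔪`. For `S = R/⟨a_1,…,a_m⟩` one has `dim R − m ≤ dim S`, stated here as
`dim R ≤ dim S + m`. -/
theorem stmt6 (R : Type*) [CommRing R] [IsNoetherianRing R] [IsLocalRing R]
    (m : ℕ) (a : Fin m → R) (ha : ∀ i, a i ∈ IsLocalRing.maximalIdeal R) :
    ringKrullDim R ≤ ringKrullDim (R ⧸ Ideal.span (Set.range a)) + (m : WithBot ℕ∞) :=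
  Stmt6Aux.aux_stmt6 m R a ha
end

section
/- Let R = P/I be a positive A-algebra and Γ ∈ K^m. The local ring R_{F_Γ} of the fiber at its origin is regular if and only if dim(R_{F_Γ}) = dim(R_{Γ₀}) − m + ecod(R_{Γ₀}). -/
open MvPolynomial IsLocalRing

/-- Taylor-type lemma: `f - C (eval x f)` is in the ideal generated by `X i - C (x i)`. -/
theorem sub_C_eval_mem {σ R : Type*} [CommRing R] (x : σ → R) (f : MvPolynomial σ R) :
    f - C (eval x f) ∈ Ideal.span (Set.range fun i => X i - C (x i)) := by
  induction f using MvPolynomial.induction_on with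
  | C a => simp
  | add p q hp hq =>
      have : p + q - C (eval x (p + q)) = (p - C (eval x p)) + (q - C (eval x q)) := by
        rw [map_add, map_add]; ring
      rw [this]; exact add_mem hp hq
  | mul_X p i hp =>
      have : p * X i - C (eval x (p * X i))
          = p * (X i - C (x i)) + (p - C (eval x p)) * C (x i) := by
        rw [map_mul, eval_X, map_mul]; ring
      rw [this]
      exact add_mem (Ideal.mul_mem_left _ _ (Ideal.subset_span ⟨i, rfl⟩))
        (Ideal.mul_mem_right _ _ hp)

theorem ker_eval_eq {σ R : Type*} [CommRing R] (x : σ → R) :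
    RingHom.ker (eval x) = Ideal.span (Set.range fun i => X i - C (x i)) := by
  apply le_antisymm
  · intro f hf
    have := sub_C_eval_mem x f
    rwa [RingHom.mem_ker.mp hf, map_zero, sub_zero] at this
  · rw [Ideal.span_le]
    rintro _ ⟨i, rfl⟩
    simp [RingHom.mem_ker, SetLike.mem_coe]


theorem mem_sq_of_mul_mem_sq {R : Type*} [CommRing R] {q : Ideal R} (hq : q.IsMaximal)
    {y r : R} (hy : y ∈ q) (hr : r ∉ q) (h : r * y ∈ q ^ 2) : y ∈ q ^ 2 := by
  obtain ⟨z, i, hi, hzi⟩ := hq.exists_inv hr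
  have hyy : y = z * (r * y) + i * y := by
    have h1 : (z * r + i) * y = y := by rw [hzi, one_mul]
    calc y = (z * r + i) * y := h1.symm
    _ = z * (r * y) + i * y := by ring
  rw [hyy]
  exact add_mem (Ideal.mul_mem_left _ _ h) (by rw [pow_two]; exact Ideal.mul_mem_mul hi hy)

set_option maxHeartbeats 2000000 in
/-- Abstract main lemma: embedding dimension of the localization of `P ⧸ J` at the point. -/
theorem edim_localization_add_finrank
    {K P : Type*} [Field K] [CommRing P] [Algebra K P]
    (ε : P →+* K) (hεa : ∀ a : K, ε (algebraMap K P a) = a)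
    {ι : Type*} [Fintype ι] [DecidableEq ι] (g : ι → P)
    (hker : RingHom.ker ε = Ideal.span (Set.range g))
    (c : ι → (P →ₗ[K] K))
    (hleib : ∀ t f₁ f₂, c t (f₁ * f₂) = ε f₁ * c t f₂ + c t f₁ * ε f₂)
    (hcg : ∀ t s, c t (g s) = if t = s then 1 else 0)
    (J : Ideal P) (hJ : J ≤ RingHom.ker ε)
    (p : Ideal (P ⧸ J)) (hp : p = (RingHom.ker ε).map (Ideal.Quotient.mk J))
    [p.IsPrime] :
    Module.finrank (ResidueField (Localization.AtPrime p))
        (CotangentSpace (Localization.AtPrime p))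
      + Module.finrank K
          (Submodule.map (LinearMap.pi c) (Submodule.restrictScalars K J))
      = Fintype.card ι := by
  classical
  set M : Ideal P := RingHom.ker ε with hM
  have hεsurj : Function.Surjective ε := fun a => ⟨algebraMap K P a, hεa a⟩
  have hMmax : M.IsMaximal := RingHom.ker_isMaximal_of_surjective ε hεsurj
  have hgM : ∀ t, g t ∈ M := fun t => hker ▸ Ideal.subset_span ⟨t, rfl⟩
  have hf1 : ∀ f : P, f - algebraMap K P (ε f) ∈ M := fun f => by
    simp only [M, RingHom.mem_ker, map_sub, hεa, sub_self]
  have hf2 : ∀ t, ∀ x ∈ M ^ 2, c t x = 0 := by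
    intro t x hx
    rw [pow_two] at hx
    refine Submodule.mul_induction_on hx (fun a ha b hb => ?_) (fun a b ha hb => ?_)
    · rw [hleib t a b, RingHom.mem_ker.mp ha, RingHom.mem_ker.mp hb]; ring
    · rw [map_add, ha, hb, add_zero]
  -- values of c on K-combinations of the g's
  have hcxv : ∀ (s : ι) (v : ι → K), c s (∑ t, algebraMap K P (v t) * g t) = v s := by
    intro s v
    rw [map_sum]
    have h1 : ∀ t, c s (algebraMap K P (v t) * g t) = v t * (if s = t then 1 else 0) := by
      intro t
      rw [← Algebra.smul_def, map_smul, hcg s t, smul_eq_mul]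
    simp [h1]
  -- key linearization
  have hf3 : ∀ x ∈ M, x - ∑ t, algebraMap K P (c t x) * g t ∈ M ^ 2 := by
    intro x hx
    have hx' : x ∈ Ideal.span (Set.range g) := hker ▸ hx
    rw [Ideal.mem_span_range_iff_exists_fun] at hx'
    obtain ⟨f, hf⟩ := hx'
    have hdiff : x - ∑ t, algebraMap K P (ε (f t)) * g t ∈ M ^ 2 := by
      rw [← hf, ← Finset.sum_sub_distrib]
      refine Submodule.sum_mem _ fun t _ => ?_
      have h2 : f t * g t - algebraMap K P (ε (f t)) * g t
          = (f t - algebraMap K P (ε (f t))) * g t := by ring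
      rw [h2, pow_two]
      exact Ideal.mul_mem_mul (hf1 (f t)) (hgM t)
    have hcs : ∀ s, c s x = ε (f s) := by
      intro s
      have h1 : c s (x - ∑ t, algebraMap K P (ε (f t)) * g t) = 0 := hf2 s _ hdiff
      rw [map_sub, hcxv s (fun t => ε (f t)), sub_eq_zero] at h1
      exact h1
    have : (∑ t, algebraMap K P (c t x) * g t) = ∑ t, algebraMap K P (ε (f t)) * g t := by
      refine Finset.sum_congr rfl fun t _ => by rw [hcs t]
    rw [this]; exact hdiff
  -- the local ring
  set S := Localization.AtPrime p with hS
  set φ : P →+* S := (algebraMap (P ⧸ J) S).comp (Ideal.Quotient.mk J) with hφ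
  have hmkSurj : Function.Surjective (Ideal.Quotient.mk J) := Ideal.Quotient.mk_surjective
  have hpmax : p.IsMaximal := by
    rcases Ideal.map_eq_top_or_isMaximal_of_surjective _ hmkSurj hMmax with h | h
    · exfalso
      have h2 := congrArg (Ideal.comap (Ideal.Quotient.mk J)) h
      rw [Ideal.comap_map_of_surjective _ hmkSurj, Ideal.comap_top] at h2
      have h3 : M ⊔ J = ⊤ := by
        rwa [← RingHom.ker_eq_comap_bot, Ideal.mk_ker] at h2
      rw [sup_eq_left.mpr hJ] at h3
      exact hMmax.ne_top h3
    · rwa [← hp] at h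
  have hmax_eq : Ideal.map (algebraMap (P ⧸ J) S) p = maximalIdeal S :=
    Localization.AtPrime.map_eq_maximalIdeal
  have hφM : Ideal.map φ M = maximalIdeal S := by
    rw [hφ, ← Ideal.map_map, ← hp, hmax_eq]
  have hφMmem : ∀ x ∈ M, φ x ∈ maximalIdeal S := fun x hx =>
    hφM ▸ Ideal.mem_map_of_mem φ hx
  have hφM2 : ∀ x ∈ M ^ 2, φ x ∈ maximalIdeal S ^ 2 := fun x hx => by
    rw [← hφM, ← Ideal.map_pow]
    exact Ideal.mem_map_of_mem φ hx
  -- the comap fact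
  have hcomap : ∀ x ∈ M, (φ x ∈ maximalIdeal S ^ 2 ↔ x ∈ M ^ 2 ⊔ J) := by
    intro x hxM
    constructor
    · intro hx
      have hx' : φ x ∈ (p ^ 2).map (algebraMap (P ⧸ J) S) := by
        rwa [Ideal.map_pow, hmax_eq]
      rw [IsLocalization.mem_map_algebraMap_iff p.primeCompl] at hx'
      obtain ⟨⟨a, s⟩, ha⟩ := hx'
      have ha' : algebraMap (P ⧸ J) S (Ideal.Quotient.mk J x * (s : P ⧸ J))
          = algebraMap (P ⧸ J) S (a : P ⧸ J) := by
        rw [map_mul]; exact ha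
      rw [IsLocalization.eq_iff_exists p.primeCompl] at ha'
      obtain ⟨u, hu⟩ := ha'
      have hmem : ((u : P ⧸ J) * (s : P ⧸ J)) * Ideal.Quotient.mk J x ∈ p ^ 2 := by
        have heq : ((u : P ⧸ J) * (s : P ⧸ J)) * Ideal.Quotient.mk J x
            = (u : P ⧸ J) * (a : P ⧸ J) := by rw [← hu]; ring
        rw [heq]
        exact Ideal.mul_mem_left _ _ a.2
      have hus : (u : P ⧸ J) * (s : P ⧸ J) ∉ p := Submonoid.mul_mem _ u.2 s.2
      have hxp : Ideal.Quotient.mk J x ∈ p := hp ▸ Ideal.mem_map_of_mem _ hxM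
      have hxp2 : Ideal.Quotient.mk J x ∈ p ^ 2 := mem_sq_of_mul_mem_sq hpmax hxp hus hmem
      rw [hp, ← Ideal.map_pow] at hxp2
      obtain ⟨w, hw, hwx⟩ := (Ideal.mem_map_iff_of_surjective _ hmkSurj).mp hxp2
      have hxw : x - w ∈ J := Ideal.Quotient.eq.mp hwx.symm
      exact Submodule.mem_sup.mpr ⟨w, hw, x - w, hxw, by ring⟩
    · intro hx
      obtain ⟨w, hw, j, hj, hsum⟩ := Submodule.mem_sup.mp hx
      have hφj : φ j = 0 := by
        rw [hφ, RingHom.comp_apply, Ideal.Quotient.eq_zero_iff_mem.mpr hj, map_zero]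
      rw [← hsum, map_add, hφj, add_zero]
      exact hφM2 w hw
  -- residue field
  set χ : K →+* ResidueField S := (residue S).comp (φ.comp (algebraMap K P)) with hχ
  have hχφ : ∀ f : P, residue S (φ f) = χ (ε f) := by
    intro f
    have hmem : φ f - φ (algebraMap K P (ε f)) ∈ maximalIdeal S := by
      rw [← map_sub]; exact hφMmem _ (hf1 f)
    exact Ideal.Quotient.eq.mpr hmem
  have hχsurj : Function.Surjective χ := by
    intro z
    obtain ⟨s, rfl⟩ := IsLocalRing.residue_surjective (R := S) z
    obtain ⟨⟨r, w⟩, hrw⟩ := IsLocalization.mk'_surjective p.primeCompl s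
    obtain ⟨xr, rfl⟩ := hmkSurj r
    obtain ⟨xw, hxw⟩ := hmkSurj (w : P ⧸ J)
    have hspec : s * algebraMap (P ⧸ J) S (w : P ⧸ J)
        = algebraMap (P ⧸ J) S (Ideal.Quotient.mk J xr) := by
      rw [← hrw]; exact IsLocalization.mk'_spec S _ _
    have hφw : φ xw = algebraMap (P ⧸ J) S (w : P ⧸ J) := by rw [hφ, RingHom.comp_apply, hxw]
    have hφr : φ xr = algebraMap (P ⧸ J) S (Ideal.Quotient.mk J xr) := rfl
    have hres : residue S s * χ (ε xw) = χ (ε xr) := by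
      have h1 := congrArg (residue S) hspec
      rw [map_mul, ← hφw, hχφ, ← hφr, hχφ] at h1
      exact h1
    have hwunit : IsUnit (χ (ε xw)) := by
      rw [← hχφ, hφw]
      exact (IsLocalization.map_units S w).map (residue S)
    have hwne : χ (ε xw) ≠ 0 := hwunit.ne_zero
    refine ⟨ε xr / ε xw, ?_⟩
    rw [map_div₀, ← hres]
    field_simp
  have hχinj : Function.Injective χ := χ.injective
  set e : K ≃+* ResidueField S := RingEquiv.ofBijective χ ⟨hχinj, hχsurj⟩ with he
  -- K-module structure on the cotangent space
  have hsmulK : ∀ (a : K) (x : CotangentSpace S), a • x = χ a • x := fun a x => by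
    rw [hχ, RingHom.comp_apply, RingHom.comp_apply,
      ← IsLocalRing.ResidueField.algebraMap_eq, hφ, RingHom.comp_apply,
      Ideal.Quotient.mk_algebraMap, ← IsScalarTower.algebraMap_apply K (P ⧸ J) S,
      algebraMap_smul, algebraMap_smul]
  have hres_smul : ∀ (s : S) (x : CotangentSpace S), residue S s • x = s • x := by
    intro s x
    rw [← IsLocalRing.ResidueField.algebraMap_eq, algebraMap_smul]
  -- the linear map θ
  set xv : (ι → K) → P := fun v => ∑ t, algebraMap K P (v t) * g t with hxv
  have hxvM : ∀ v, xv v ∈ M := fun v =>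
    Submodule.sum_mem _ fun t _ => Ideal.mul_mem_left _ _ (hgM t)
  have hθadd : ∀ v w, xv (v + w) = xv v + xv w := by
    intro v w
    rw [hxv, ← Finset.sum_add_distrib]
    refine Finset.sum_congr rfl fun t _ => ?_
    simp [map_add, add_mul]
  have hθsmul : ∀ (a : K) v, xv (a • v) = algebraMap K P a * xv v := by
    intro a v
    rw [hxv, Finset.mul_sum]
    refine Finset.sum_congr rfl fun t _ => ?_
    simp [map_mul, mul_assoc, Algebra.smul_def]
  set θ : (ι → K) →ₗ[K] CotangentSpace S :=
    { toFun := fun v => (maximalIdeal S).toCotangent ⟨φ (xv v), hφMmem _ (hxvM v)⟩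
      map_add' := by
        intro v w
        show (maximalIdeal S).toCotangent ⟨φ (xv (v + w)), hφMmem _ (hxvM _)⟩
          = (maximalIdeal S).toCotangent ⟨φ (xv v), hφMmem _ (hxvM v)⟩
            + (maximalIdeal S).toCotangent ⟨φ (xv w), hφMmem _ (hxvM w)⟩
        rw [← map_add]
        congr 1
        apply Subtype.ext
        show φ (xv (v + w)) = _
        rw [hθadd, map_add]
        rfl
      map_smul' := by
        intro a v
        show (maximalIdeal S).toCotangent ⟨φ (xv (a • v)), hφMmem _ (hxvM _)⟩
          = a • (maximalIdeal S).toCotangent ⟨φ (xv v), hφMmem _ (hxvM v)⟩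
        have h1 : (⟨φ (xv (a • v)), hφMmem _ (hxvM _)⟩ : maximalIdeal S)
            = φ (algebraMap K P a) • ⟨φ (xv v), hφMmem _ (hxvM v)⟩ := by
          apply Subtype.ext
          show φ (xv (a • v)) = _
          rw [hθsmul, map_mul]
          rfl
        rw [h1, map_smul]
        rw [hsmulK, hχ, ← hres_smul]
        rfl } with hθ
  have hθφ : ∀ (x : P) (hx : x ∈ M),
      (maximalIdeal S).toCotangent ⟨φ x, hφMmem x hx⟩ = θ (fun t => c t x) := by
    intro x hx
    show _ = (maximalIdeal S).toCotangent ⟨φ (xv fun t => c t x), hφMmem _ (hxvM _)⟩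
    rw [Ideal.toCotangent_eq]
    show φ x - φ (xv fun t => c t x) ∈ _
    rw [← map_sub]
    exact hφM2 _ (hf3 x hx)
  -- surjectivity of θ
  have hθsurj : ∀ y : CotangentSpace S, ∃ v, θ v = y := by
    set W : Submodule S (CotangentSpace S) :=
      { carrier := Set.range θ
        add_mem' := by rintro _ _ ⟨v, rfl⟩ ⟨w, rfl⟩; exact ⟨v + w, map_add θ v w⟩
        zero_mem' := ⟨0, map_zero θ⟩
        smul_mem' := by
          rintro s _ ⟨v, rfl⟩
          refine ⟨(e.symm (residue S s)) • v, ?_⟩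
          rw [map_smul, hsmulK]
          have h1 : χ (e.symm (residue S s)) = residue S s := e.apply_symm_apply _
          rw [h1]
          exact hres_smul s (θ v) } with hW
    have hsub : Submodule.span S
        {y : ↥(maximalIdeal S) | ∃ x, ∃ hx : x ∈ M, y = ⟨φ x, hφMmem x hx⟩} = ⊤ := by
      apply Submodule.map_injective_of_injective
        (Submodule.injective_subtype (maximalIdeal S))
      rw [Submodule.map_span, Submodule.map_top, Submodule.range_subtype]
      have himg : (maximalIdeal S).subtype ''
          {y : ↥(maximalIdeal S) | ∃ x, ∃ hx : x ∈ M, y = ⟨φ x, hφMmem x hx⟩}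
          = φ '' (M : Set P) := by
        ext z
        constructor
        · rintro ⟨y, ⟨x, hx, rfl⟩, rfl⟩
          exact ⟨x, hx, rfl⟩
        · rintro ⟨x, hx, rfl⟩
          exact ⟨⟨φ x, hφMmem x hx⟩, ⟨x, hx, rfl⟩, rfl⟩
      rw [himg]
      show Ideal.span (φ '' (M : Set P)) = _
      rw [← Ideal.map, hφM]
    have hcomapW : Submodule.span S
        {y : ↥(maximalIdeal S) | ∃ x, ∃ hx : x ∈ M, y = ⟨φ x, hφMmem x hx⟩}
        ≤ Submodule.comap ((maximalIdeal S).toCotangent) W := by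
      rw [Submodule.span_le]
      rintro y ⟨x, hx, rfl⟩
      show (maximalIdeal S).toCotangent ⟨φ x, hφMmem x hx⟩ ∈ W
      rw [hθφ x hx]
      exact ⟨_, rfl⟩
    intro y
    obtain ⟨z, rfl⟩ := Ideal.toCotangent_surjective (maximalIdeal S) y
    have hz : z ∈ Submodule.span S
        {y : ↥(maximalIdeal S) | ∃ x, ∃ hx : x ∈ M, y = ⟨φ x, hφMmem x hx⟩} :=
      hsub.symm ▸ Submodule.mem_top
    exact hcomapW hz
  -- kernel of θ
  have hθker : ∀ v, θ v = 0 ↔ v ∈ Submodule.map (LinearMap.pi c) (Submodule.restrictScalars K J) := by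
    intro v
    have h0 : θ v = 0 ↔ φ (xv v) ∈ maximalIdeal S ^ 2 := by
      show (maximalIdeal S).toCotangent ⟨φ (xv v), hφMmem _ (hxvM v)⟩ = 0 ↔ _
      rw [Ideal.toCotangent_eq_zero]
    rw [h0, hcomap _ (hxvM v)]
    constructor
    · intro hx
      obtain ⟨w, hw, j, hj, hsum⟩ := Submodule.mem_sup.mp hx
      refine ⟨j, hj, ?_⟩
      funext s
      show c s j = v s
      have h1 : c s (xv v) = v s := hcxv s v
      have h2 : c s (xv v) = c s w + c s j := by rw [← map_add, hsum]
      rw [hf2 s w hw, zero_add] at h2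
      rw [← h2, h1]
    · rintro ⟨j, hj, rfl⟩
      have hjM : j ∈ M := hJ hj
      have h3 := hf3 j hjM
      refine Submodule.mem_sup.mpr ⟨xv (LinearMap.pi c j) - j, ?_, j, hj, by ring⟩
      have : xv (LinearMap.pi c j) - j = -(j - ∑ t, algebraMap K P (c t j) * g t) := by
        rw [hxv]
        show (∑ t, algebraMap K P (c t j) * g t) - j = _
        ring
      rw [this]
      exact neg_mem h3
  -- rank–nullity over K
  have hrank : Module.finrank K (CotangentSpace S)
      + Module.finrank K (Submodule.map (LinearMap.pi c) (Submodule.restrictScalars K J))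
      = Fintype.card ι := by
    have h1 := LinearMap.finrank_range_add_finrank_ker θ
    have hr : LinearMap.range θ = ⊤ := LinearMap.range_eq_top.mpr fun y => hθsurj y
    have hk : LinearMap.ker θ
        = Submodule.map (LinearMap.pi c) (Submodule.restrictScalars K J) := by
      ext v
      rw [LinearMap.mem_ker]
      exact hθker v
    rw [hr, hk, finrank_top, Module.finrank_fintype_fun_eq_card] at h1
    exact h1
  -- transport of finrank along the residue field isomorphism
  have htrans : Module.finrank K (CotangentSpace S)
      = Module.finrank (ResidueField S) (CotangentSpace S) := by
    let b := Module.Basis.ofVectorSpace (ResidueField S) (CotangentSpace S)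
    have hcompat : ∀ (a : ResidueField S) (x : CotangentSpace S), e.symm a • x = a • x := by
      intro a x
      rw [hsmulK]
      have : χ (e.symm a) = a := e.apply_symm_apply a
      rw [this]
    let b' := b.mapCoeffs e.symm hcompat
    have hb := b.mk_eq_rank''
    have hb' := b'.mk_eq_rank''
    rw [Module.finrank, Module.finrank, ← hb, ← hb']
  rw [← htrans]
  exact hrank

set_option maxHeartbeats 3200000 in
/-- **Regularity of `R_{F_Γ}`.** The local ring `R_{F_Γ}` of the fiber at its origin is regular (i.e. `edim = dim`, `eF = dF`) iff `dim R_{F_Γ} = dim R_{Γ₀} − m + ecod R_{Γ₀}`. -/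
theorem stmt10 (K : Type*) [Field K] (m k : ℕ) (w : Fin k → ℕ) (hw : ∀ i, 0 < w i)
    (I : Ideal (MvPolynomial (Fin k) (MvPolynomial (Fin m) K)))
    (hIhom : ∀ f ∈ I, ∀ n : ℕ, weightedHomogeneousComponent w n f ∈ I)
    (hIA : ∀ a : MvPolynomial (Fin m) K,
      (C a : MvPolynomial (Fin k) (MvPolynomial (Fin m) K)) ∈ I → a = 0)
    (Γ : Fin m → K)
    -- the maximal ideal of `P` corresponding to the zero point `Γ₀ = (Γ, 0, …, 0)`
    (MΓ : Ideal (MvPolynomial (Fin k) (MvPolynomial (Fin m) K)))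
    (hMΓ : MΓ = Ideal.span
      ((Set.range fun i : Fin m =>
          (C (X i - C (Γ i)) : MvPolynomial (Fin k) (MvPolynomial (Fin m) K))) ∪
        Set.range (X : Fin k → MvPolynomial (Fin k) (MvPolynomial (Fin m) K))))
    -- its image in `R = P/I`
    (pΓ : Ideal (MvPolynomial (Fin k) (MvPolynomial (Fin m) K) ⧸ I))
    (hpΓ : pΓ = Ideal.map (Ideal.Quotient.mk I) MΓ) [pΓ.IsPrime]
    -- the fiber ideal `I_Γ ⊆ K[x_1,…,x_k]`, image of `I` under `a_i ↦ γ_i`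
    (IΓ : Ideal (MvPolynomial (Fin k) K))
    (hIΓ : IΓ = Ideal.map (MvPolynomial.map (eval Γ)) I)
    -- the maximal ideal of the fiber ring at the origin
    (qΓ : Ideal (MvPolynomial (Fin k) K ⧸ IΓ))
    (hqΓ : qΓ = Ideal.map (Ideal.Quotient.mk IΓ)
      (Ideal.span (Set.range (X : Fin k → MvPolynomial (Fin k) K)))) [qΓ.IsPrime]
    -- Krull dimensions and embedding dimensions of the two local rings
    (d0 e0 dF eF : ℕ)
    (hd0 : ringKrullDim (@Localization.AtPrime (MvPolynomial (Fin k) (MvPolynomial (Fin m) K) ⧸ I) CommRing.toCommSemiring pΓ _) = d0)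
    (he0 : haveI : IsLocalRing (@Localization.AtPrime (MvPolynomial (Fin k) (MvPolynomial (Fin m) K) ⧸ I) CommRing.toCommSemiring pΓ _) := @Localization.AtPrime.isLocalRing (MvPolynomial (Fin k) (MvPolynomial (Fin m) K) ⧸ I) CommRing.toCommSemiring pΓ _
      Module.finrank (ResidueField (@Localization.AtPrime (MvPolynomial (Fin k) (MvPolynomial (Fin m) K) ⧸ I) CommRing.toCommSemiring pΓ _))
      (CotangentSpace (@Localization.AtPrime (MvPolynomial (Fin k) (MvPolynomial (Fin m) K) ⧸ I) CommRing.toCommSemiring pΓ _)) = e0)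
    (hdF : ringKrullDim (Localization.AtPrime qΓ) = dF)
    (heF : Module.finrank (ResidueField (Localization.AtPrime qΓ))
      (CotangentSpace (Localization.AtPrime qΓ)) = eF) :
    ((eF : ℤ) = (dF : ℤ)) ↔ ((dF : ℤ) = (d0 : ℤ) - m + ((e0 : ℤ) - d0)) := by
  classical
  -- abbreviations (not `set` to keep statements literal)
  -- constant coefficients of elements of I vanish
  have hcc : ∀ f ∈ I, constantCoeff f = 0 := by
    intro f hf
    have h1 := hIhom f hf 0
    rw [weightedHomogeneousComponent_zero f (fun i => (hw i).ne')] at h1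
    have h2 := hIA _ h1
    rw [constantCoeff_eq]
    exact h2
  -- the two evaluation homomorphisms
  set εB : MvPolynomial (Fin k) (MvPolynomial (Fin m) K) →+* K :=
    (eval Γ).comp constantCoeff with hεB
  have hεBapp : ∀ f, εB f = eval Γ (constantCoeff f) := fun _ => rfl
  set εF : MvPolynomial (Fin k) K →+* K := eval (0 : Fin k → K) with hεF
  have hεaB : ∀ a : K, εB (algebraMap K _ a) = a := by
    intro a
    rw [hεBapp, IsScalarTower.algebraMap_apply K (MvPolynomial (Fin m) K) _,
      MvPolynomial.algebraMap_eq, constantCoeff_C, MvPolynomial.algebraMap_eq, eval_C]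
  have hεaF : ∀ a : K, εF (algebraMap K _ a) = a := by
    intro a
    rw [hεF, MvPolynomial.algebraMap_eq, eval_C]
  -- commutation of the two evaluations with `map (eval Γ)`
  have heval2 : ∀ f, εF (MvPolynomial.map (eval Γ) f) = εB f := by
    intro f
    have h : εF.comp (MvPolynomial.map (eval Γ)
        : MvPolynomial (Fin k) (MvPolynomial (Fin m) K) →+* MvPolynomial (Fin k) K) = εB := by
      apply MvPolynomial.ringHom_ext
      · intro a
        simp [hεF, hεBapp]
      · intro j
        simp [hεF, hεBapp]
    exact DFunLike.congr_fun h f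
  -- scalar multiplication helpers
  have hsmulP : ∀ (a : K) (f : MvPolynomial (Fin k) (MvPolynomial (Fin m) K)),
      a • f = C (C a) * f := by
    intro a f
    rw [Algebra.smul_def, IsScalarTower.algebraMap_apply K (MvPolynomial (Fin m) K) _,
      MvPolynomial.algebraMap_eq, MvPolynomial.algebraMap_eq]
  -- the generators
  set gB : Fin m ⊕ Fin k → MvPolynomial (Fin k) (MvPolynomial (Fin m) K) :=
    Sum.elim (fun i => (C (X i - C (Γ i)) : MvPolynomial (Fin k) (MvPolynomial (Fin m) K)))
      (X : Fin k → MvPolynomial (Fin k) (MvPolynomial (Fin m) K)) with hgB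
  have hMΓg : MΓ = Ideal.span (Set.range gB) := by
    rw [hMΓ, hgB, Set.Sum.elim_range]
  -- `X`-spans
  have hXspanB : ∀ f : MvPolynomial (Fin k) (MvPolynomial (Fin m) K),
      f - C (constantCoeff f) ∈ Ideal.span (Set.range (X : Fin k → _)) := by
    intro f
    have h1 : f - C (constantCoeff f) ∈ RingHom.ker (eval (0 : Fin k → MvPolynomial (Fin m) K)) := by
      rw [RingHom.mem_ker, map_sub, eval_zero, constantCoeff_C, sub_self]
    rw [ker_eval_eq] at h1
    have h2 : (fun i : Fin k => (X i : MvPolynomial (Fin k) (MvPolynomial (Fin m) K))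
        - C ((0 : Fin k → MvPolynomial (Fin m) K) i)) = X := by
      funext i; simp
    rwa [h2] at h1
  have hXspanF : ∀ q : MvPolynomial (Fin k) K,
      q - C (constantCoeff q) ∈ Ideal.span (Set.range (X : Fin k → _)) := by
    intro q
    have h1 : q - C (constantCoeff q) ∈ RingHom.ker (eval (0 : Fin k → K)) := by
      rw [RingHom.mem_ker, map_sub, eval_zero, constantCoeff_C, sub_self]
    rw [ker_eval_eq] at h1
    have h2 : (fun i : Fin k => (X i : MvPolynomial (Fin k) K)
        - C ((0 : Fin k → K) i)) = X := by
      funext i; simp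
    rwa [h2] at h1
  -- kernels
  have hkerF : RingHom.ker εF = Ideal.span (Set.range (X : Fin k → MvPolynomial (Fin k) K)) := by
    apply le_antisymm
    · intro q hq
      rw [RingHom.mem_ker, hεF, eval_zero] at hq
      have := hXspanF q
      rwa [hq, map_zero, sub_zero] at this
    · rw [Ideal.span_le]
      rintro _ ⟨j, rfl⟩
      simp [RingHom.mem_ker, hεF, SetLike.mem_coe]
  have hkerB : RingHom.ker εB = Ideal.span (Set.range gB) := by
    apply le_antisymm
    · intro f hf
      rw [RingHom.mem_ker, hεBapp] at hf
      have h1 : f - C (constantCoeff f) ∈ Ideal.span (Set.range gB) := by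
        refine Ideal.span_mono ?_ (hXspanB f)
        rintro _ ⟨j, rfl⟩
        exact ⟨Sum.inr j, rfl⟩
      have h2 : (C (constantCoeff f) : MvPolynomial (Fin k) (MvPolynomial (Fin m) K))
          ∈ Ideal.span (Set.range gB) := by
        have h3 : constantCoeff f ∈ RingHom.ker (eval Γ) := hf
        rw [ker_eval_eq] at h3
        have h4 := Ideal.mem_map_of_mem (C : MvPolynomial (Fin m) K →+*
          MvPolynomial (Fin k) (MvPolynomial (Fin m) K)) h3
        rw [Ideal.map_span] at h4
        refine Ideal.span_mono ?_ h4
        rintro _ ⟨_, ⟨i, rfl⟩, rfl⟩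
        exact ⟨Sum.inl i, rfl⟩
      have h5 : f = (f - C (constantCoeff f)) + C (constantCoeff f) := by ring
      rw [h5]
      exact add_mem h1 h2
    · rw [Ideal.span_le]
      rintro _ ⟨t, rfl⟩
      rcases t with i | j
      · simp [RingHom.mem_ker, hεBapp, hgB, SetLike.mem_coe]
      · simp [RingHom.mem_ker, hεBapp, hgB, SetLike.mem_coe]
  -- the linear functionals
  set cF : Fin k → (MvPolynomial (Fin k) K →ₗ[K] K) := fun j =>
    { toFun := fun q => eval (0 : Fin k → K) (pderiv j q)
      map_add' := fun q r => by simp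
      map_smul' := fun a q => by
        simp [smul_eq_C_mul, pderiv_C_mul] } with hcF
  set cB : Fin m ⊕ Fin k → (MvPolynomial (Fin k) (MvPolynomial (Fin m) K) →ₗ[K] K) :=
    Sum.elim
      (fun i =>
        { toFun := fun f => eval Γ (pderiv i (constantCoeff f))
          map_add' := fun q r => by simp
          map_smul' := fun a q => by
            show eval Γ (pderiv i (constantCoeff (a • q))) = a • eval Γ (pderiv i (constantCoeff q))
            rw [hsmulP, map_mul, constantCoeff_C, pderiv_C_mul, map_mul, eval_C, smul_eq_mul] })
      (fun j =>
        { toFun := fun f => eval Γ (constantCoeff (pderiv j f))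
          map_add' := fun q r => by simp
          map_smul' := fun a q => by
            show eval Γ (constantCoeff (pderiv j (a • q))) = a • eval Γ (constantCoeff (pderiv j q))
            rw [hsmulP, pderiv_C_mul, map_mul, constantCoeff_C, map_mul, eval_C, smul_eq_mul] })
    with hcB
  have hcBinl : ∀ (i : Fin m) f, cB (Sum.inl i) f = eval Γ (pderiv i (constantCoeff f)) :=
    fun i f => rfl
  have hcBinr : ∀ (j : Fin k) f, cB (Sum.inr j) f = eval Γ (constantCoeff (pderiv j f)) :=
    fun j f => rfl
  have hcFapp : ∀ (j : Fin k) q, cF j q = eval (0 : Fin k → K) (pderiv j q) := fun j q => rfl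
  -- Leibniz rules
  have hleibF : ∀ (t : Fin k) (f₁ f₂ : MvPolynomial (Fin k) K),
      cF t (f₁ * f₂) = εF f₁ * cF t f₂ + cF t f₁ * εF f₂ := by
    intro t f₁ f₂
    rw [hcFapp, hcFapp, hcFapp, pderiv_mul, map_add, map_mul, map_mul]
    show _ = εF f₁ * _ + _ * εF f₂
    rw [hεF]
    ring
  have hleibB : ∀ (t : Fin m ⊕ Fin k) (f₁ f₂ : MvPolynomial (Fin k) (MvPolynomial (Fin m) K)),
      cB t (f₁ * f₂) = εB f₁ * cB t f₂ + cB t f₁ * εB f₂ := by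
    rintro (i | j) f₁ f₂
    · rw [hcBinl, hcBinl, hcBinl, hεBapp, hεBapp]
      simp only [map_mul, pderiv_mul, map_add]
      ring
    · rw [hcBinr, hcBinr, hcBinr, hεBapp, hεBapp]
      simp only [pderiv_mul, map_add, map_mul]
      ring
  -- values on generators
  have hcgF : ∀ t s : Fin k, cF t ((X : Fin k → MvPolynomial (Fin k) K) s)
      = if t = s then 1 else 0 := by
    intro t s
    rw [hcFapp]
    by_cases h : t = s
    · subst h; simp [pderiv_X_self]
    · rw [pderiv_X_of_ne (Ne.symm h), map_zero, if_neg h]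
  have hcgB : ∀ t s : Fin m ⊕ Fin k, cB t (gB s) = if t = s then 1 else 0 := by
    rintro (i | j) (i' | j')
    · rw [hcBinl]
      show eval Γ (pderiv i (constantCoeff (C (X i' - C (Γ i'))))) = _
      rw [constantCoeff_C]
      by_cases h : i = i'
      · subst h
        simp [pderiv_X_self, pderiv_C]
      · rw [map_sub, pderiv_X_of_ne (Ne.symm h), pderiv_C, sub_zero, map_zero,
          if_neg (by simp [h])]
    · rw [hcBinl]
      show eval Γ (pderiv i (constantCoeff (X j'))) = _
      rw [constantCoeff_X, map_zero, map_zero, if_neg (by simp)]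
    · rw [hcBinr]
      show eval Γ (constantCoeff (pderiv j (C (X i' - C (Γ i'))))) = _
      rw [pderiv_C, map_zero, map_zero, if_neg (by simp)]
    · rw [hcBinr]
      show eval Γ (constantCoeff (pderiv j (X j'))) = _
      by_cases h : j = j'
      · subst h; simp [pderiv_X_self]
      · rw [pderiv_X_of_ne (Ne.symm h), map_zero, map_zero, if_neg (by simp [h])]
  -- apply the abstract lemma on the big side
  have hMΓker : RingHom.ker εB = MΓ := by rw [hkerB, ← hMΓg]
  have hJB : I ≤ RingHom.ker εB := by
    intro f hf
    rw [RingHom.mem_ker, hεBapp, hcc f hf, map_zero]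
  have hpB : pΓ = (RingHom.ker εB).map (Ideal.Quotient.mk I) := by rw [hpΓ, hMΓker]
  have hALB := edim_localization_add_finrank εB hεaB gB hkerB cB hleibB hcgB I hJB pΓ hpB
  -- apply the abstract lemma on the fiber side
  have hJF : IΓ ≤ RingHom.ker εF := by
    rw [hIΓ, Ideal.map_le_iff_le_comap]
    intro f hf
    rw [Ideal.mem_comap, RingHom.mem_ker, heval2, hεBapp, hcc f hf, map_zero]
  have hqF : qΓ = (RingHom.ker εF).map (Ideal.Quotient.mk IΓ) := by rw [hqΓ, hkerF]
  have hALF := edim_localization_add_finrank εF hεaF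
    (X : Fin k → MvPolynomial (Fin k) K) hkerF cF hleibF hcgF IΓ hJF qΓ hqF
  -- compare the two subspaces of linear parts
  set L : (Fin k → K) →ₗ[K] (Fin m ⊕ Fin k → K) :=
    { toFun := fun v => Sum.elim (fun _ => 0) v
      map_add' := fun v w => by funext t; rcases t with i | j <;> simp
      map_smul' := fun a v => by funext t; rcases t with i | j <;> simp } with hL
  have hLinj : Function.Injective L := by
    intro v w h
    funext j
    exact congrFun h (Sum.inr j)
  have hstep : ∀ f ∈ I,
      LinearMap.pi cB f = L (LinearMap.pi cF (MvPolynomial.map (eval Γ) f)) := by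
    intro f hf
    funext t
    rcases t with i | j
    · show cB (Sum.inl i) f = _
      rw [hcBinl, hcc f hf, map_zero, map_zero]
      rfl
    · show cB (Sum.inr j) f = LinearMap.pi cF (MvPolynomial.map (eval Γ) f) j
      rw [hcBinr]
      show _ = cF j (MvPolynomial.map (eval Γ) f)
      rw [hcFapp, pderiv_map]
      exact (heval2 (pderiv j f)).symm
  have hUB : Submodule.map (LinearMap.pi cB) (Submodule.restrictScalars K I)
      = Submodule.map L (Submodule.map (LinearMap.pi cF) (Submodule.restrictScalars K IΓ)) := by
    apply le_antisymm
    · rintro _ ⟨f, hf, rfl⟩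
      exact ⟨LinearMap.pi cF (MvPolynomial.map (eval Γ) f),
        ⟨MvPolynomial.map (eval Γ) f, hIΓ ▸ Ideal.mem_map_of_mem _ hf, rfl⟩,
        (hstep f hf).symm⟩
    · rintro _ ⟨_, ⟨q, hq, rfl⟩, rfl⟩
      have hq' : q ∈ Ideal.span ((MvPolynomial.map (eval Γ)) '' I) := by
        rw [hIΓ] at hq
        exact hq
      have key : εF q = 0 ∧ L (LinearMap.pi cF q)
          ∈ Submodule.map (LinearMap.pi cB) (Submodule.restrictScalars K I) := by
        refine Submodule.span_induction ?_ ?_ ?_ ?_ hq'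
        · rintro _ ⟨f, hf, rfl⟩
          refine ⟨?_, ⟨f, hf, hstep f hf⟩⟩
          rw [heval2, hεBapp, hcc f hf, map_zero]
        · exact ⟨map_zero _, by rw [map_zero, map_zero]; exact Submodule.zero_mem _⟩
        · rintro x y hx hy ⟨hx1, hx2⟩ ⟨hy1, hy2⟩
          refine ⟨by rw [map_add, hx1, hy1, add_zero], ?_⟩
          rw [map_add, map_add]
          exact Submodule.add_mem _ hx2 hy2
        · rintro r x hx ⟨hx1, hx2⟩
          refine ⟨by rw [smul_eq_mul, map_mul, hx1, mul_zero], ?_⟩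
          have h1 : LinearMap.pi cF (r • x) = εF r • LinearMap.pi cF x := by
            funext j
            simp only [LinearMap.pi_apply, Pi.smul_apply, smul_eq_mul]
            rw [hleibF j r x, hx1, mul_zero, add_zero]
          rw [h1, map_smul]
          exact Submodule.smul_mem _ _ hx2
      exact key.2
  have hfinUB : Module.finrank K
        (Submodule.map (LinearMap.pi cB) (Submodule.restrictScalars K I))
      = Module.finrank K
        (Submodule.map (LinearMap.pi cF) (Submodule.restrictScalars K IΓ)) := by
    rw [hUB]
    exact (LinearEquiv.finrank_eq (Submodule.equivMapOfInjective L hLinj _)).symm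
  -- combine everything
  rw [he0, Fintype.card_sum, Fintype.card_fin, Fintype.card_fin, hfinUB] at hALB
  rw [heF, Fintype.card_fin] at hALF
  have hkey : e0 = m + eF := by omega
  omega
end

section
/- Let A = K[a_1,...,a_m], P = A[x_1,...,x_k], and let I = ⟨g_1,...,g_s⟩ be an ideal of P contained in ⟨x_1,...,x_k⟩. Then the A-linear part of I is generated by the A-linear parts of the generators: Lin_A(I) = ⟨Lin_A(g_1),...,Lin_A(g_s)⟩_A. In particular, Lin_A(I) is independent of the chosen system of generators. -/
open MvPolynomial

lemma constCoeff_zero_of_mem_spanX {R : Type*} [CommRing R] {k : ℕ}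
    {f : MvPolynomial (Fin k) R}
    (hf : f ∈ Ideal.span (Set.range (X : Fin k → MvPolynomial (Fin k) R))) :
    constantCoeff f = 0 := by
  have : Ideal.span (Set.range (X : Fin k → MvPolynomial (Fin k) R)) ≤
      RingHom.ker (constantCoeff : MvPolynomial (Fin k) R →+* R) := by
    rw [Ideal.span_le]
    rintro _ ⟨i, rfl⟩
    simp [RingHom.mem_ker]
  exact this hf

lemma homComp_one_mul_eq_zero {R : Type*} [CommRing R] {k : ℕ}
    {q f : MvPolynomial (Fin k) R}
    (hq : constantCoeff q = 0) (hf : constantCoeff f = 0) :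
    homogeneousComponent 1 (q * f) = 0 := by
  ext d
  rw [coeff_homogeneousComponent]
  split_ifs with hd
  · rw [coeff_mul]
    apply Finset.sum_eq_zero
    rintro ⟨a, b⟩ hab
    rw [Finset.HasAntidiagonal.mem_antidiagonal] at hab
    have hdeg : a.degree + b.degree = 1 := by
      have hda : ∀ u v : Fin k →₀ ℕ, (u + v).degree = u.degree + v.degree := by
        intro u v
        simp [Finsupp.degree_eq_weight_one, map_add]
      rw [← hda, hab, hd]
    rcases Nat.eq_zero_or_pos a.degree with ha | ha
    · have : a = 0 := (Finsupp.degree_eq_zero_iff a).mp ha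
      subst this
      simp only [← constantCoeff_eq] at hq ⊢
      simp [hq]
    · have hb : b.degree = 0 := by omega
      have : b = 0 := (Finsupp.degree_eq_zero_iff b).mp hb
      subst this
      simp only [← constantCoeff_eq] at hf ⊢
      simp [hf]
  · simp

/-- Let `A = K[a_1,…,a_m]`, `P = A[x_1,…,x_k]`, and
`I = ⟨g_1,…,g_s⟩ ⊆ ⟨x_1,…,x_k⟩` an ideal of `P`. Then the `A`-linear part of `I`
(the `A`-module generated by the `A`-linear parts, i.e. the `x`-degree-one homogeneous
components, of all elements of `I`) is generated by the `A`-linear parts of the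
generators: `Lin_A(I) = ⟨Lin_A g_1, …, Lin_A g_s⟩_A`. -/
theorem stmt13 (K : Type*) [Field K] (m k s : ℕ)
    (g : Fin s → MvPolynomial (Fin k) (MvPolynomial (Fin m) K))
    (I : Ideal (MvPolynomial (Fin k) (MvPolynomial (Fin m) K)))
    (hI : I = Ideal.span (Set.range g))
    (hIX : I ≤ Ideal.span (Set.range (X : Fin k →
      MvPolynomial (Fin k) (MvPolynomial (Fin m) K)))) :
    Submodule.span (MvPolynomial (Fin m) K)
        ((fun f => homogeneousComponent 1 f) ''
          (I : Set (MvPolynomial (Fin k) (MvPolynomial (Fin m) K)))) =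
      Submodule.span (MvPolynomial (Fin m) K)
        (Set.range fun i => homogeneousComponent 1 (g i)) := by
  apply le_antisymm
  · rw [Submodule.span_le]
    rintro _ ⟨f, hf, rfl⟩
    -- f ∈ I = span (range g)
    rw [hI] at hf
    refine Submodule.span_induction (p := fun x _ =>
      homogeneousComponent 1 x ∈ Submodule.span (MvPolynomial (Fin m) K)
        (Set.range fun i => homogeneousComponent 1 (g i))) ?_ ?_ ?_ ?_ hf
    · rintro _ ⟨i, rfl⟩
      exact Submodule.subset_span ⟨i, rfl⟩
    · simp
    · intro x y _ _ hx hy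
      rw [map_add]
      exact Submodule.add_mem _ hx hy
    · intro a x hxmem hx
      have hx0 : constantCoeff x = 0 :=
        constCoeff_zero_of_mem_spanX (hIX (hI ▸ hxmem))
      have hdecomp : a * x = C (constantCoeff a) * x + (a - C (constantCoeff a)) * x := by
        ring
      have h2 : homogeneousComponent 1 ((a - C (constantCoeff a)) * x) = 0 := by
        apply homComp_one_mul_eq_zero _ hx0
        simp
      rw [smul_eq_mul, hdecomp, map_add, h2, add_zero, homogeneousComponent_C_mul]
      have : (C (constantCoeff a) : MvPolynomial (Fin k) (MvPolynomial (Fin m) K)) * homogeneousComponent 1 x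
          = (constantCoeff a) • homogeneousComponent 1 x := by
        rw [smul_eq_C_mul]
      rw [this]
      exact Submodule.smul_mem _ _ hx
  · rw [Submodule.span_le]
    rintro _ ⟨i, rfl⟩
    exact Submodule.subset_span ⟨g i, by rw [hI]; exact Ideal.subset_span ⟨i, rfl⟩, rfl⟩
end

section
/- Let A = K[a_1,...,a_m], P = A[x_1,...,x_k], I ⊆ ⟨x_1,...,x_k⟩ an ideal, Γ = (γ_1,...,γ_m) ∈ K^m, and ε_Γ : P → K[x_1,...,x_k] the evaluation a_i ↦ γ_i. Then the linear part of the fiber ideal I_Γ = ε_Γ(I)·K[X] at the origin satisfies Lin(I_Γ) = ε_Γ(Lin_A(I)), i.e., taking A-linear parts commutes with specialization of the parameters. -/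
open MvPolynomial

lemma hc_map' {σ R S : Type*} [CommSemiring R] [CommSemiring S]
    (φ : R →+* S) (n : ℕ) (f : MvPolynomial σ R) :
    MvPolynomial.map φ (homogeneousComponent n f)
      = homogeneousComponent n (MvPolynomial.map φ f) := by
  ext d
  simp only [coeff_map, coeff_homogeneousComponent]
  split <;> simp

lemma hc1_mul' {σ : Type*} {R : Type*} [CommSemiring R]
    (p q : MvPolynomial σ R) (hq : coeff 0 q = 0) :
    homogeneousComponent 1 (p * q) = C (coeff 0 p) * homogeneousComponent 1 q := by
  classical
  ext d
  simp only [coeff_homogeneousComponent, coeff_C_mul]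
  split
  · rename_i hd
    rw [coeff_mul, Finset.sum_eq_single ((0 : σ →₀ ℕ), d)]
    · rintro ⟨u, v⟩ hmem hne
      rw [Finset.HasAntidiagonal.mem_antidiagonal] at hmem
      have huv : u + v = d := hmem
      have hdeg : u.degree + v.degree = 1 := by
        rw [Finsupp.degree_eq_weight_one] at hd ⊢
        rw [← map_add, huv, hd]
      rcases Nat.add_eq_one_iff.mp hdeg with ⟨h1, h2⟩ | ⟨h1, h2⟩
      · exfalso
        have hu : u = 0 := (Finsupp.degree_eq_zero_iff u).mp h1
        subst hu
        simp only [zero_add] at huv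
        exact hne (by simp [huv])
      · have hv : v = 0 := (Finsupp.degree_eq_zero_iff v).mp h2
        subst hv
        simp [hq]
    · intro h
      exact absurd (Finset.HasAntidiagonal.mem_antidiagonal.mpr (zero_add d)) h
  · simp

lemma coeff_zero_of_mem_span_X {σ R : Type*} [CommSemiring R]
    {f : MvPolynomial σ R}
    (hf : f ∈ Ideal.span (Set.range (X : σ → MvPolynomial σ R))) :
    coeff 0 f = 0 := by
  rw [← Set.image_univ] at hf
  rw [mem_ideal_span_X_image] at hf
  by_contra h
  obtain ⟨i, -, hi⟩ := hf 0 (mem_support_iff.mpr h)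
  simp at hi

/-- Let `A = K[a_1,…,a_m]`, `P = A[x_1,…,x_k]`, `I ⊆ ⟨x_1,…,x_k⟩`
an ideal, `Γ ∈ K^m`, and `ε_Γ : P → K[x_1,…,x_k]` the evaluation `a_i ↦ γ_i`.
Then the linear part (at the origin) of the fiber ideal `I_Γ = ε_Γ(I)·K[X]` satisfies
`Lin(I_Γ) = ε_Γ(Lin_A(I))`: taking (A-)linear parts commutes with specialization. -/
theorem stmt14 (K : Type*) [Field K] (m k : ℕ)
    (I : Ideal (MvPolynomial (Fin k) (MvPolynomial (Fin m) K)))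
    (hIX : I ≤ Ideal.span (Set.range (X : Fin k →
      MvPolynomial (Fin k) (MvPolynomial (Fin m) K))))
    (Γ : Fin m → K) :
    Submodule.span K
        ((fun f => homogeneousComponent 1 f) ''
          ((Ideal.map (MvPolynomial.map (eval Γ)) I : Ideal (MvPolynomial (Fin k) K)) :
            Set (MvPolynomial (Fin k) K))) =
      Submodule.span K
        ((MvPolynomial.map (eval Γ)) ''
          ((fun f => homogeneousComponent 1 f) ''
            (I : Set (MvPolynomial (Fin k) (MvPolynomial (Fin m) K))))) := by
  set φ := MvPolynomial.map (σ := Fin k) (eval Γ : MvPolynomial (Fin m) K →+* K) with hφ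
  apply le_antisymm
  · rw [Submodule.span_le]
    rintro _ ⟨g, hg, rfl⟩
    have key : ∀ g ∈ Ideal.map φ I, coeff 0 g = 0 ∧
        homogeneousComponent 1 g ∈ Submodule.span K
          (φ '' ((fun f => homogeneousComponent 1 f) '' (I : Set _))) := by
      intro g hg
      induction hg using Submodule.span_induction with
      | mem x hx =>
        obtain ⟨f, hf, rfl⟩ := hx
        have h0 : coeff 0 f = 0 := coeff_zero_of_mem_span_X (hIX hf)
        constructor
        · rw [hφ, coeff_map, h0, map_zero]
        · rw [← hc_map']
          exact Submodule.subset_span ⟨homogeneousComponent 1 f, ⟨f, hf, rfl⟩, rfl⟩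
      | zero => simp
      | add x y hx hy ihx ihy =>
        refine ⟨by simp [ihx.1, ihy.1], by simpa using add_mem ihx.2 ihy.2⟩
      | smul r x hx ih =>
        have h0 : coeff 0 x = 0 := ih.1
        constructor
        · simp [smul_eq_mul, coeff_mul, h0, Finsupp.antidiagonal_zero]
        · rw [smul_eq_mul, hc1_mul' r x h0, ← smul_eq_C_mul]
          exact Submodule.smul_mem _ _ ih.2
    exact (key g hg).2
  · rw [Submodule.span_le]
    rintro _ ⟨_, ⟨f, hf, rfl⟩, rfl⟩
    simp only
    rw [hc_map']
    exact Submodule.subset_span ⟨φ f, Ideal.mem_map_of_mem φ hf, rfl⟩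
end
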